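/- arXiv:2111.12045 — 8 statements merged into one kernel-verified Lean document; each statement's English description precedes it below -/
import Mathlib

section
/- Let H > 0 be a real number, T a positive integer, and (u_t)_{t≥1} a sequence of real numbers with 0 ≤ u_t ≤ H for all t. Define U_0 = 0 and U_t = ∑_{ℓ=1}^t u_ℓ, and let Ω = {t ∈ {0,...,T} : U_t < u_{t+1} − 1}. Then ∑_{t ∈ Ω} √(u_{t+1} / max(U_t, 1)) ≤ 2H. -/
open scoped Classical

/-
Every index `t ∈ Ω` has `u (t+1) > U t + 1 ≥ 1`, so its summand is at most `u (t+1)`: the square root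
of a number `≥ 1` is at most the number, and dividing by `max (U t) 1 ≥ 1` only makes it smaller.
If `b` is the largest index of `Ω`, the sum of these `u (t+1)` is then at most
`U (b+1) = U b + u (b+1) ≤ 2 u (b+1) ≤ 2H`.
-/

open Finset

lemma sum_Icc_one_eq_sum_range_succ {M : Type*} [AddCommMonoid M] (f : ℕ → M) (n : ℕ) :
    ∑ i ∈ Icc 1 n, f i = ∑ i ∈ range n, f (i + 1) := by
  rw [range_eq_Ico, sum_Ico_add', ← Ico_add_one_right_eq_Icc, zero_add]

lemma Real.sqrt_div_max_one_le_self {x : ℝ} (hx : 1 ≤ x) (y : ℝ) : √(x / max y 1) ≤ x :=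
  calc √(x / max y 1) ≤ √x := Real.sqrt_le_sqrt (div_le_self (by linarith) (le_max_right y 1))
    _ ≤ x := Real.sqrt_le_self_iff.mpr (Or.inr hx)

lemma sum_le_two_mul_of_sum_range_le {v : ℕ → ℝ} (hv : ∀ i, 0 ≤ v i) {s : Finset ℕ} {b : ℕ}
    (hs : ∀ i ∈ s, i ≤ b) (hb : ∑ i ∈ range b, v i ≤ v b) : ∑ i ∈ s, v i ≤ 2 * v b :=
  calc ∑ i ∈ s, v i ≤ ∑ i ∈ range (b + 1), v i :=
        sum_le_sum_of_subset_of_nonneg (fun i hi => mem_range_succ_iff.mpr (hs i hi))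
          (fun i _ _ => hv i)
    _ = ∑ i ∈ range b, v i + v b := sum_range_succ v b
    _ ≤ 2 * v b := by linarith

theorem pigeonhole_sqrt_part_general (H : ℝ) (T : ℕ)
    (u U : ℕ → ℝ)
    (hu : ∀ t, 1 ≤ t → 0 ≤ u t ∧ u t ≤ H)
    (hU : ∀ t, U t = ∑ ℓ ∈ Finset.Icc 1 t, u ℓ) :
    ∑ t ∈ (Finset.range (T + 1)).filter (fun t => U t < u (t + 1) - 1),
        Real.sqrt (u (t + 1) / max (U t) 1) ≤ 2 * H := by
  set Ω := (range (T + 1)).filter (fun t => U t < u (t + 1) - 1)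
  have hu_nonneg (t : ℕ) : 0 ≤ u (t + 1) := (hu (t + 1) t.succ_pos).1
  have hU_eq (t : ℕ) : U t = ∑ i ∈ range t, u (i + 1) := by
    rw [hU, sum_Icc_one_eq_sum_range_succ]
  have hU_lt (t : ℕ) (ht : t ∈ Ω) : U t < u (t + 1) - 1 := (mem_filter.mp ht).2
  have hU_nonneg (t : ℕ) : 0 ≤ U t := hU_eq t ▸ sum_nonneg fun i _ => hu_nonneg i
  rcases Ω.eq_empty_or_nonempty with hΩ | hΩ
  · rw [hΩ, sum_empty]
    linarith [hu 1 le_rfl]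
  have hb := Ω.max'_mem hΩ
  calc ∑ t ∈ Ω, √(u (t + 1) / max (U t) 1)
      ≤ ∑ t ∈ Ω, u (t + 1) := sum_le_sum fun t ht =>
        Real.sqrt_div_max_one_le_self (by linarith [hU_lt t ht, hU_nonneg t]) _
    _ ≤ 2 * u (Ω.max' hΩ + 1) := sum_le_two_mul_of_sum_range_le hu_nonneg (Ω.le_max' · ·)
        (by linarith [hU_eq (Ω.max' hΩ), hU_lt _ hb])
    _ ≤ 2 * H := by linarith [(hu _ (Ω.max' hΩ).succ_pos).2]

/-- Part (i) of the technical pigeonhole lemma: the sum over the "large jump"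
indices `Ω = {t ∈ {0,…,T} : U t < u (t+1) - 1}` of `√(u_{t+1} / max(U_t, 1))`
is bounded by `2H`. -/
theorem pigeonhole_sqrt_part (H : ℝ) (hH : 0 < H) (T : ℕ) (hT : 0 < T)
    (u U : ℕ → ℝ)
    (hu : ∀ t, 1 ≤ t → 0 ≤ u t ∧ u t ≤ H)
    (hU : ∀ t, U t = ∑ ℓ ∈ Finset.Icc 1 t, u ℓ) :
    ∑ t ∈ (Finset.range (T + 1)).filter (fun t => U t < u (t + 1) - 1),
        Real.sqrt (u (t + 1) / max (U t) 1) ≤ 2 * H :=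
  pigeonhole_sqrt_part_general H T u U hu hU
end

section
/- Let H > 0 be a real number, T a positive integer, and (u_t)_{t≥1} a sequence of real numbers with 0 ≤ u_t ≤ H for all t. Define U_0 = 0 and U_t = ∑_{ℓ=1}^t u_ℓ, and let Ω = {t ∈ {0,...,T} : U_t < u_{t+1} − 1}. Then ∑_{t ∈ {0,...,T} \ Ω} u_{t+1} / max(U_t, 1) ≤ 4·log(U_{T+1} + 1), where log denotes the natural logarithm. -/
/-!
Each admissible term is dominated by an increment of `t ↦ 4 log (U t + 1)`: outside `Ω` we have
`u_{t+1} ≤ U_t + 1`, so `U_{t+1} + 1 ≤ 4 max(U_t, 1)`, and `1 - 1/x ≤ log x` turns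
`u_{t+1} / (U_{t+1} + 1)` into a bound by `log (U_{t+1} + 1) - log (U_t + 1)`.
Since `U` is nondecreasing these increments are nonnegative, so the sum over the admissible
indices is at most the full telescoping sum `4 log (U_{T+1} + 1)`.
-/

open scoped Classical

open Finset

theorem Finset.sum_le_sub_of_le_sub_of_monotone {β : Type*} [AddCommGroup β] [PartialOrder β]
    [IsOrderedAddMonoid β] {f g : ℕ → β} (hg : Monotone g) {s : Finset ℕ} {n : ℕ}
    (hs : s ⊆ range n) (hf : ∀ t ∈ s, f t ≤ g (t + 1) - g t) :
    ∑ t ∈ s, f t ≤ g n - g 0 :=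
  calc ∑ t ∈ s, f t ≤ ∑ t ∈ s, (g (t + 1) - g t) := sum_le_sum hf
    _ ≤ ∑ t ∈ range n, (g (t + 1) - g t) :=
      sum_le_sum_of_subset_of_nonneg hs fun t _ _ => sub_nonneg.2 (hg t.le_succ)
    _ = g n - g 0 := sum_range_sub g n

theorem Real.sub_div_le_log_sub_log {x y : ℝ} (hx : 0 < x) (hy : 0 < y) :
    (y - x) / y ≤ Real.log y - Real.log x := by
  have h := Real.one_sub_inv_le_log_of_pos (div_pos hy hx)
  rwa [inv_div, Real.log_div hy.ne' hx.ne', ← div_self hy.ne', ← sub_div] at h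

theorem div_max_one_le_four_mul_div_add {a b : ℝ} (ha : 0 ≤ a) (hb : 0 ≤ b) (hba : b ≤ a + 1) :
    b / max a 1 ≤ 4 * (b / (a + b + 1)) := by
  have hle : (a + b + 1) / 4 ≤ max a 1 := by
    rcases le_total a 1 with h | h
    · rw [max_eq_right h]; linarith
    · rw [max_eq_left h]; linarith
  calc b / max a 1 ≤ b / ((a + b + 1) / 4) := div_le_div_of_nonneg_left hb (by positivity) hle
    _ = 4 * (b / (a + b + 1)) := by field_simp

theorem div_max_one_le_four_mul_log_sub_log {a b : ℝ} (ha : 0 ≤ a) (hb : 0 ≤ b)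
    (hba : b ≤ a + 1) :
    b / max a 1 ≤ 4 * (Real.log (a + b + 1) - Real.log (a + 1)) := by
  have hlog := Real.sub_div_le_log_sub_log (x := a + 1) (y := a + b + 1) (by positivity)
    (by positivity)
  rw [show a + b + 1 - (a + 1) = b by ring] at hlog
  linarith [div_max_one_le_four_mul_div_add ha hb hba]

theorem pigeonhole_log_part_general (H : ℝ) (T : ℕ)
    (u U : ℕ → ℝ)
    (hu : ∀ t, 1 ≤ t → 0 ≤ u t ∧ u t ≤ H)
    (hU : ∀ t, U t = ∑ ℓ ∈ Finset.Icc 1 t, u ℓ) :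
    ∑ t ∈ (Finset.range (T + 1)).filter (fun t => ¬ (U t < u (t + 1) - 1)),
        u (t + 1) / max (U t) 1 ≤ 4 * Real.log (U (T + 1) + 1) := by
  have hu_nonneg : ∀ t, 0 ≤ u (t + 1) := fun t => (hu (t + 1) le_add_self).1
  have hU_succ : ∀ t, U (t + 1) = U t + u (t + 1) := fun t => by
    rw [hU, hU, sum_Icc_succ_top (by omega)]
  have hU_mono : Monotone U := monotone_nat_of_le_succ fun t => by
    linarith [hU_succ t, hu_nonneg t]
  have hU_nonneg : ∀ t, 0 ≤ U t := fun t => by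
    simpa [hU 0] using hU_mono (Nat.zero_le t)
  have hg : Monotone fun t => 4 * Real.log (U t + 1) := fun s t hst => by
    dsimp only
    gcongr
    · linarith [hU_nonneg s]
    · exact hU_mono hst
  calc _ ≤ 4 * Real.log (U (T + 1) + 1) - 4 * Real.log (U 0 + 1) :=
        sum_le_sub_of_le_sub_of_monotone hg (filter_subset _ _) fun t ht => by
          rw [hU_succ t, ← mul_sub]
          exact div_max_one_le_four_mul_log_sub_log (hU_nonneg t) (hu_nonneg t)
            (by linarith [(mem_filter.1 ht).2])
    _ = 4 * Real.log (U (T + 1) + 1) := by simp [hU 0]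

/-- Part (ii) of the technical pigeonhole lemma: the sum over the indices in
`{0,…,T}` outside `Ω = {t : U t < u (t+1) - 1}` of `u_{t+1} / max(U_t, 1)`
is bounded by `4 log(U_{T+1} + 1)`. -/
theorem pigeonhole_log_part (H : ℝ) (hH : 0 < H) (T : ℕ) (hT : 0 < T)
    (u U : ℕ → ℝ)
    (hu : ∀ t, 1 ≤ t → 0 ≤ u t ∧ u t ≤ H)
    (hU : ∀ t, U t = ∑ ℓ ∈ Finset.Icc 1 t, u ℓ) :
    ∑ t ∈ (Finset.range (T + 1)).filter (fun t => ¬ (U t < u (t + 1) - 1)),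
        u (t + 1) / max (U t) 1 ≤ 4 * Real.log (U (T + 1) + 1) :=
  pigeonhole_log_part_general H T u U hu hU
end

section
/- Let H > 0 be a real number, T a positive integer, and (u_t)_{t≥1} a sequence of real numbers with 0 ≤ u_t ≤ H for all t. Define U_0 = 0 and U_t = ∑_{ℓ=1}^t u_ℓ. Then ∑_{t=0}^{T} min( u_{t+1} / max(U_t, 1), 1 ) ≤ 4·log(U_{T+1} + 1), where log denotes the natural logarithm. -/
/-!
Writing `a = U_t` and `b = u_{t+1}`, each summand satisfies
`min (b / max a 1) 1 ≤ 4 b / (a + 1 + b) ≤ 4 (log (a + 1 + b) - log (a + 1))`,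
so the sum telescopes to `4 log (U_{T+1} + 1) - 4 log (U_0 + 1) = 4 log (U_{T+1} + 1)`.
-/

open Finset

lemma div_add_le_log_add_sub_log {a b : ℝ} (ha : 0 < a) (hb : 0 ≤ b) :
    b / (a + b) ≤ Real.log (a + b) - Real.log a := by
  have hab : 0 < a + b := by linarith
  calc b / (a + b) = 1 - ((a + b) / a)⁻¹ := by field_simp; ring
    _ ≤ Real.log ((a + b) / a) := Real.one_sub_inv_le_log_of_pos (by positivity)
    _ = Real.log (a + b) - Real.log a := Real.log_div hab.ne' ha.ne'

lemma min_div_max_one_le {a b : ℝ} (ha : 0 ≤ a) (hb : 0 ≤ b) :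
    min (b / max a 1) 1 ≤ 4 * (b / (a + 1 + b)) := by
  have hsum : 0 < a + 1 + b := by linarith
  rw [mul_div_assoc', le_div_iff₀ hsum]
  rcases le_total b (a + 1) with hba | hab
  · have hmax : a + 1 + b ≤ 4 * max a 1 := by
      rcases le_total a 1 with h | h
      · rw [max_eq_right h]; linarith
      · rw [max_eq_left h]; linarith
    calc min (b / max a 1) 1 * (a + 1 + b) ≤ b / max a 1 * (4 * max a 1) :=
          mul_le_mul (min_le_left _ _) hmax hsum.le (by positivity)
      _ = 4 * b := by field_simp [(lt_max_of_lt_right one_pos).ne']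
  · calc min (b / max a 1) 1 * (a + 1 + b) ≤ 1 * (a + 1 + b) :=
          mul_le_mul_of_nonneg_right (min_le_right _ _) hsum.le
      _ ≤ 4 * b := by linarith

theorem pigeonhole_min_part_general (H : ℝ) (T : ℕ)
    (u U : ℕ → ℝ)
    (hu : ∀ t, 1 ≤ t → 0 ≤ u t ∧ u t ≤ H)
    (hU : ∀ t, U t = ∑ ℓ ∈ Finset.Icc 1 t, u ℓ) :
    ∑ t ∈ Finset.range (T + 1),
        min (u (t + 1) / max (U t) 1) 1 ≤ 4 * Real.log (U (T + 1) + 1) := by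
  have hU_nonneg (t : ℕ) : 0 ≤ U t := by
    rw [hU]
    exact sum_nonneg fun ℓ hℓ => (hu ℓ (mem_Icc.mp hℓ).1).1
  have hU_succ (t : ℕ) : U (t + 1) = U t + u (t + 1) := by
    rw [hU, hU, sum_Icc_succ_top (by omega)]
  have hstep (t : ℕ) : min (u (t + 1) / max (U t) 1) 1 ≤
      4 * (Real.log (U (t + 1) + 1) - Real.log (U t + 1)) := by
    have hu_succ := (hu (t + 1) (by omega)).1
    have hlog := div_add_le_log_add_sub_log (by linarith [hU_nonneg t] : 0 < U t + 1) hu_succ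
    rw [show U (t + 1) + 1 = U t + 1 + u (t + 1) by rw [hU_succ]; ring]
    linarith [min_div_max_one_le (hU_nonneg t) hu_succ]
  calc ∑ t ∈ range (T + 1), min (u (t + 1) / max (U t) 1) 1
      ≤ ∑ t ∈ range (T + 1), 4 * (Real.log (U (t + 1) + 1) - Real.log (U t + 1)) :=
        sum_le_sum fun t _ => hstep t
    _ = 4 * (Real.log (U (T + 1) + 1) - Real.log (U 0 + 1)) := by
        rw [← mul_sum, sum_range_sub (fun t => Real.log (U t + 1))]
    _ = 4 * Real.log (U (T + 1) + 1) := by simp [hU 0]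

/-- Part (iii) of the technical pigeonhole lemma: the sum over `t ∈ {0,…,T}` of
`min(u_{t+1} / max(U_t, 1), 1)` is bounded by `4 log(U_{T+1} + 1)`. -/
theorem pigeonhole_min_part (H : ℝ) (hH : 0 < H) (T : ℕ) (hT : 0 < T)
    (u U : ℕ → ℝ)
    (hu : ∀ t, 1 ≤ t → 0 ≤ u t ∧ u t ≤ H)
    (hU : ∀ t, U t = ∑ ℓ ∈ Finset.Icc 1 t, u ℓ) :
    ∑ t ∈ Finset.range (T + 1),
        min (u (t + 1) / max (U t) 1) 1 ≤ 4 * Real.log (U (T + 1) + 1) :=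
  pigeonhole_min_part_general H T u U hu hU
end

section
/- There exists an absolute constant κ > 0 such that for all real numbers B ≥ 1, C ≥ 1, α ≥ e, and X ≥ 2: if X ≤ B·√X·log(αX) + C·log²(αX), then X ≤ κ·( B²·log²(αB) + C·log²(αC) ). -/
/-!
Completing the square in `√X` gives `X ≤ B² L² + 2 C L²` with `L = log (α X)`, so one of the two
terms dominates: `X ≤ A L²` with `A = 3 B²` or `A = 4 C`. Since the logarithm grows more slowly
than `x / e`, the implicit inequality `α X ≤ α A (log (α X))²` forces `log (α X) ≤ 4 log (α A)`,
and `log (α A)` is at most `3 log (α B)`, resp. `3 log (α C)`.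
-/

open Real

lemma Real.log_le_div_exp_one {x : ℝ} (hx : 0 < x) : log x ≤ x / exp 1 := by
  have h := add_one_le_exp (log x - 1)
  rw [exp_sub, exp_log hx] at h
  linarith

lemma Real.log_le_four_mul_log_of_le_mul_log_sq {y a : ℝ} (hy : 1 < y)
    (h : y ≤ a * log y ^ 2) : log y ≤ 4 * log a := by
  have hlog : 0 < log y := log_pos hy
  have ha : 0 < a := pos_of_mul_pos_left ((by linarith : (0 : ℝ) < y).trans_le h) (by positivity)
  have hloglog : 2 * log (log y) ≤ 3 / 4 * log y := by
    have he := exp_one_gt_d9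
    have h3 : log y / exp 1 ≤ 3 / 8 * log y := by
      rw [div_le_iff₀ (exp_pos 1)]; nlinarith
    linarith [log_le_div_exp_one hlog]
  have hmono : log y ≤ log a + 2 * log (log y) := by
    calc log y ≤ log (a * log y ^ 2) := log_le_log (by linarith) h
      _ = log a + 2 * log (log y) := by
        rw [log_mul ha.ne' (by positivity), log_pow]; push_cast; ring
  linarith

lemma le_sq_add_two_mul_of_le_mul_sqrt_add {X b c : ℝ} (hX : 0 ≤ X)
    (h : X ≤ b * √X + c) : X ≤ b ^ 2 + 2 * c := by
  nlinarith [sq_nonneg (√X - b), sq_sqrt hX]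

lemma le_mul_log_sq_of_le_mul_log_sq {α A X : ℝ} (hα : 0 < α) (hαX : 1 < α * X)
    (h : X ≤ A * log (α * X) ^ 2) : X ≤ 16 * A * log (α * A) ^ 2 := by
  have hL : 0 < log (α * X) := log_pos hαX
  have hA : 0 < A := by
    have hX : 0 < X := pos_of_mul_pos_right (by linarith) hα.le
    exact pos_of_mul_pos_left (hX.trans_le h) (by positivity)
  have hinv : log (α * X) ≤ 4 * log (α * A) :=
    log_le_four_mul_log_of_le_mul_log_sq hαX
      (by rw [mul_assoc]; exact mul_le_mul_of_nonneg_left h hα.le)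
  calc X ≤ A * log (α * X) ^ 2 := h
    _ ≤ A * (4 * log (α * A)) ^ 2 := by gcongr
    _ = 16 * A * log (α * A) ^ 2 := by ring

lemma log_mul_le_three_mul_log_mul {α A D : ℝ} (hα : 2 ≤ α) (hD : 1 ≤ D) (hA : 0 < A)
    (hAD : A ≤ 4 * D ^ 2) : log (α * A) ≤ 3 * log (α * D) := by
  have hαD : 4 ≤ α ^ 2 * D := by nlinarith
  calc log (α * A) ≤ log ((α * D) ^ 3) := by
        apply log_le_log (by positivity)
        nlinarith [mul_le_mul_of_nonneg_left hαD (by positivity : (0 : ℝ) ≤ α * D ^ 2)]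
    _ = 3 * log (α * D) := by rw [log_pow]; norm_num

lemma le_mul_log_mul_sq_of_le_mul_log_sq {α A D X : ℝ} (hα : 2 ≤ α) (hD : 1 ≤ D) (hA : 1 ≤ A)
    (hAD : A ≤ 4 * D ^ 2) (hαX : 1 < α * X) (h : X ≤ A * log (α * X) ^ 2) :
    X ≤ 144 * A * log (α * D) ^ 2 := by
  have hlog : 0 ≤ log (α * A) := log_nonneg (by nlinarith)
  calc X ≤ 16 * A * log (α * A) ^ 2 := le_mul_log_sq_of_le_mul_log_sq (by linarith) hαX h
    _ ≤ 16 * A * (3 * log (α * D)) ^ 2 := by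
      gcongr; exact log_mul_le_three_mul_log_mul hα hD (by linarith) hAD
    _ = 144 * A * log (α * D) ^ 2 := by ring

/-- The auxiliary functional-inequality inversion lemma: there is an absolute
constant `κ > 0` such that for all `B, C ≥ 1`, `α ≥ e`, `X ≥ 2`, if
`X ≤ B √X log(αX) + C log²(αX)` then `X ≤ κ (B² log²(αB) + C log²(αC))`. -/
theorem aux_inequality_inversion :
    ∃ κ : ℝ, 0 < κ ∧
      ∀ B C α X : ℝ, 1 ≤ B → 1 ≤ C → Real.exp 1 ≤ α → 2 ≤ X →
        X ≤ B * Real.sqrt X * Real.log (α * X) + C * (Real.log (α * X)) ^ 2 →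
        X ≤ κ * (B ^ 2 * (Real.log (α * B)) ^ 2 + C * (Real.log (α * C)) ^ 2) := by
  refine ⟨576, by norm_num, fun B C α X hB hC hα hX h => ?_⟩
  have hα2 : 2 ≤ α := by linarith [add_one_le_exp (1 : ℝ)]
  have hαX : 1 < α * X := by nlinarith
  set L := log (α * X)
  have hsplit : X ≤ (B * L) ^ 2 + 2 * (C * L ^ 2) :=
    le_sq_add_two_mul_of_le_mul_sqrt_add (by linarith) (by linarith [h])
  have hBP := mul_nonneg (sq_nonneg B) (sq_nonneg (log (α * B)))
  have hCQ := mul_nonneg (by linarith : (0 : ℝ) ≤ C) (sq_nonneg (log (α * C)))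
  rcases le_total ((B * L) ^ 2) (C * L ^ 2) with hdom | hdom
  · have := le_mul_log_mul_sq_of_le_mul_log_sq (A := 4 * C) hα2 hC (by linarith) (by nlinarith)
      hαX (by linarith)
    linarith
  · have := le_mul_log_mul_sq_of_le_mul_log_sq (A := 3 * B ^ 2) hα2 hB (by nlinarith) (by nlinarith)
      hαX (by linarith)
    linarith
end

section
/- For all real numbers B ≥ 1, α ≥ e, and X ≥ 2: if X ≤ B·√X·log(αX), then X ≤ (64·B²/9)·log²(4·e·B·√α). -/
/-! With `Y = √X` the hypothesis reads `Y ≤ B (log α + 2 log Y)`. The tangent-line bound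
`log Y ≤ Y / (4 e B) + log (4 B)` turns this into `Y ≤ B log α + 2 B log (4 B) + Y / (2 e)`,
and since `2 e ≥ 4` this gives `Y ≤ (8 B / 3) log (4 e B √α)`; squaring finishes. -/

open Real

namespace Real

lemma log_le_div_add_log_sub_one {x c : ℝ} (hx : 0 < x) (hc : 0 < c) :
    log x ≤ x / c + log c - 1 := by
  have := log_le_sub_one_of_pos (div_pos hx hc)
  rw [log_div hx.ne' hc.ne'] at this
  linarith

lemma log_four_mul_exp_one_mul_sqrt {B α : ℝ} (hB : 0 < B) (hα : 0 < α) :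
    log (4 * exp 1 * B * √α) = log (4 * B) + 1 + log α / 2 := by
  rw [show 4 * exp 1 * B * √α = 4 * B * exp 1 * √α by ring,
    log_mul (by positivity) (sqrt_pos.mpr hα).ne', log_mul (by positivity) (exp_pos 1).ne',
    log_exp, log_sqrt hα.le]

lemma le_of_le_mul_add_two_mul_log {B a Y : ℝ} (hB : 0 < B) (hY : 0 < Y)
    (h : Y ≤ B * (a + 2 * log Y)) :
    Y ≤ 8 * B / 3 * (log (4 * B) + 1 + a / 2) := by
  have he : 2 < exp 1 := lt_trans (by norm_num) exp_one_gt_d9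
  have hlogY : log Y ≤ Y / (4 * B * exp 1) + log (4 * B) := by
    have := log_le_div_add_log_sub_one hY (by positivity : 0 < 4 * B * exp 1)
    rw [log_mul (by positivity) (exp_pos 1).ne', log_exp] at this
    linarith
  have hhalf : 2 * B * (Y / (4 * B * exp 1)) = Y / (2 * exp 1) := by
    field_simp
    ring
  have hquarter : Y / (2 * exp 1) ≤ Y / 4 :=
    div_le_div_of_nonneg_left hY.le (by norm_num) (by linarith)
  linarith [mul_le_mul_of_nonneg_left hlogY (by positivity : (0 : ℝ) ≤ 2 * B)]

end Real

/-- Square-root branch of the auxiliary inequality lemma: for `B ≥ 1`, `α ≥ e`,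
`X ≥ 2`, if `X ≤ B √X log(αX)` then `X ≤ (64 B²/9) log²(4 e B √α)`. -/
theorem aux_inequality_sqrt_branch (B α X : ℝ) (hB : 1 ≤ B)
    (hα : Real.exp 1 ≤ α) (hX : 2 ≤ X)
    (h : X ≤ B * Real.sqrt X * Real.log (α * X)) :
    X ≤ (64 * B ^ 2 / 9) * (Real.log (4 * Real.exp 1 * B * Real.sqrt α)) ^ 2 := by
  have hB₀ : 0 < B := by linarith
  have hα₀ : 0 < α := (exp_pos 1).trans_le hα
  have hX₀ : 0 < X := by linarith
  have hY : 0 < √X := sqrt_pos.mpr hX₀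
  have hlog : log (α * X) = log α + 2 * log √X := by
    rw [log_mul hα₀.ne' hX₀.ne', log_sqrt hX₀.le]
    ring
  have hsqrt : √X ≤ B * (log α + 2 * log √X) := by
    rw [← hlog]
    refine le_of_mul_le_mul_right ?_ hY
    rwa [mul_self_sqrt hX₀.le, mul_right_comm]
  have key := le_of_le_mul_add_two_mul_log hB₀ hY hsqrt
  rw [log_four_mul_exp_one_mul_sqrt hB₀ hα₀]
  calc X = √X ^ 2 := (sq_sqrt hX₀.le).symm
    _ ≤ (8 * B / 3 * (log (4 * B) + 1 + log α / 2)) ^ 2 := pow_le_pow_left₀ hY.le key 2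
    _ = _ := by ring
end

section
/- Let S be a finite nonempty set, H ≥ 1 an integer, g ∈ S, and for each h ∈ {1,...,H−1} let P_h : S × S → ℝ be a transition matrix, i.e., P_h(s,s') ≥ 0 for all s,s' and ∑_{s'∈S} P_h(s,s') = 1 for all s; assume g is absorbing, i.e., P_h(g,g) = 1 for all h. Define the failure probabilities backward by ρ_H(s) = 1 if s ≠ g and ρ_H(g) = 0, and ρ_h(s) = ∑_{s'∈S} P_h(s,s')·ρ_{h+1}(s') for 1 ≤ h ≤ H−1 (so ρ_h(s) is the probability that s_H ≠ g for the time-inhomogeneous Markov chain with transition matrices (P_h) started at s_h = s). Define the values backward by V_H(s) = 1 if s ≠ g, V_H(g) = 0, and V_h(s) = 1[s ≠ g] + ∑_{s'∈S} P_h(s,s')·V_{h+1}(s') for 1 ≤ h ≤ H−1. Then for every s ∈ S, ρ_1(s) ≤ V_1(s)/H. -/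
/-! Backward induction on `h` shows `ρ h ≤ 1[· ≠ g]` and `(H - h + 1) • ρ h ≤ V h`.
The first bound propagates because the absorbing row of `g` kills the indicator. For the
second, `V h` pays `1[s ≠ g] ≥ ρ h s` at the current step, and the transition average of
`V (h + 1) ≥ (H - h) • ρ (h + 1)` dominates `(H - h) • ρ h`. At `h = 1` this is
`H • ρ 1 ≤ V 1`. -/

open Finset

section AbsorbingChain

variable {S : Type*} [Fintype S] [DecidableEq S]

theorem sum_mul_ite_ne_eq_sub (g : S) (p : S → ℝ) :
    ∑ t, p t * (if t = g then 0 else 1) = ∑ t, p t - p g := by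
  simp [mul_ite, Finset.sum_ite, Finset.filter_ne', Finset.sum_erase_eq_sub]

theorem sum_mul_le_ite_of_absorbing {g : S} {Q : S → S → ℝ} (hQnn : ∀ s t, 0 ≤ Q s t)
    (hQrow : ∀ s, ∑ t, Q s t = 1) (habs : Q g g = 1) {f : S → ℝ}
    (hf : ∀ t, f t ≤ if t = g then 0 else 1) (s : S) :
    ∑ t, Q s t * f t ≤ if s = g then 0 else 1 :=
  calc ∑ t, Q s t * f t ≤ ∑ t, Q s t * (if t = g then 0 else 1) :=
        sum_le_sum fun t _ => mul_le_mul_of_nonneg_left (hf t) (hQnn s t)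
    _ = 1 - Q s g := by rw [sum_mul_ite_ne_eq_sub, hQrow]
    _ ≤ if s = g then 0 else 1 := by
        split_ifs with hs
        · simp [hs, habs]
        · linarith [hQnn s g]

end AbsorbingChain

theorem mul_sum_mul_le_sum_mul {ι : Type*} (s : Finset ι) {p f F : ι → ℝ} (c : ℝ)
    (hp : ∀ i, 0 ≤ p i) (hf : ∀ i, c * f i ≤ F i) :
    c * ∑ i ∈ s, p i * f i ≤ ∑ i ∈ s, p i * F i := by
  rw [mul_sum]
  exact sum_le_sum fun i _ => by
    rw [mul_left_comm]
    exact mul_le_mul_of_nonneg_left (hf i) (hp i)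

theorem failure_prob_le_value_div_horizon_general
    {S : Type*} [Fintype S] [DecidableEq S]
    (H : ℕ) (hH : 1 ≤ H) (g : S) (P : ℕ → S → S → ℝ)
    (hPnn : ∀ h, 1 ≤ h → h < H → ∀ s s' : S, 0 ≤ P h s s')
    (hProw : ∀ h, 1 ≤ h → h < H → ∀ s : S, ∑ s' : S, P h s s' = 1)
    (habs : ∀ h, 1 ≤ h → h < H → P h g g = 1)
    (ρ V : ℕ → S → ℝ)
    (hρH : ∀ s : S, ρ H s = if s = g then 0 else 1)
    (hρ : ∀ h, 1 ≤ h → h < H → ∀ s : S, ρ h s = ∑ s' : S, P h s s' * ρ (h + 1) s')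
    (hVH : ∀ s : S, V H s = if s = g then 0 else 1)
    (hV : ∀ h, 1 ≤ h → h < H → ∀ s : S,
      V h s = (if s = g then 0 else 1) + ∑ s' : S, P h s s' * V (h + 1) s') :
    ∀ s : S, ρ 1 s ≤ V 1 s / H := by
  have key : ∀ m, m ≤ H → 1 ≤ m → ∀ s, ρ m s ≤ (if s = g then 0 else 1) ∧
      ((H : ℝ) - m + 1) * ρ m s ≤ V m s := by
    intro m hm
    induction hm using Nat.decreasingInduction with
    | self => intro _ s; simp [hρH, hVH]
    | of_succ k hk ih =>
      intro hk1 s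
      obtain ⟨ihρ, ihV⟩ := forall_and.mp (ih (by omega))
      have hρk := sum_mul_le_ite_of_absorbing (hPnn k hk1 hk) (hProw k hk1 hk)
        (habs k hk1 hk) ihρ s
      rw [hρ k hk1 hk, hV k hk1 hk]
      refine ⟨hρk, ?_⟩
      calc ((H : ℝ) - k + 1) * ∑ t, P k s t * ρ (k + 1) t
          = ∑ t, P k s t * ρ (k + 1) t
            + ((H : ℝ) - (k + 1 : ℕ) + 1) * ∑ t, P k s t * ρ (k + 1) t := by
            push_cast; ring
        _ ≤ _ := add_le_add hρk (mul_sum_mul_le_sum_mul _ _ (hPnn k hk1 hk s) ihV)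
  intro s
  have hHρ := (key 1 hH le_rfl s).2
  rw [le_div_iff₀ (by positivity)]
  simpa [mul_comm] using hHρ

/-- Markov-inequality step of Lemma 9: in a time-inhomogeneous Markov chain on a
finite state space with absorbing goal state `g`, the probability `ρ 1 s` of not
having reached `g` by step `H`, started from `s` at step `1`, is at most
`V 1 s / H` where `V` is the expected cumulative unit cost (`1` per step at a
non-goal state). -/
theorem failure_prob_le_value_div_horizon
    {S : Type*} [Fintype S] [DecidableEq S] [Nonempty S]
    (H : ℕ) (hH : 1 ≤ H) (g : S) (P : ℕ → S → S → ℝ)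
    (hPnn : ∀ h, 1 ≤ h → h < H → ∀ s s' : S, 0 ≤ P h s s')
    (hProw : ∀ h, 1 ≤ h → h < H → ∀ s : S, ∑ s' : S, P h s s' = 1)
    (habs : ∀ h, 1 ≤ h → h < H → P h g g = 1)
    (ρ V : ℕ → S → ℝ)
    (hρH : ∀ s : S, ρ H s = if s = g then 0 else 1)
    (hρ : ∀ h, 1 ≤ h → h < H → ∀ s : S, ρ h s = ∑ s' : S, P h s s' * ρ (h + 1) s')
    (hVH : ∀ s : S, V H s = if s = g then 0 else 1)
    (hV : ∀ h, 1 ≤ h → h < H → ∀ s : S,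
      V h s = (if s = g then 0 else 1) + ∑ s' : S, P h s s' * V (h + 1) s') :
    ∀ s : S, ρ 1 s ≤ V 1 s / H :=
  failure_prob_le_value_div_horizon_general H hH g P hPnn hProw habs ρ V hρH hρ hVH hV
end

section
/- Let S be a finite nonempty set, H ≥ 1 an integer, g ∈ S, and for each h ∈ {1,...,H−1} let P_h : S × S → ℝ be a transition matrix, i.e., P_h(s,s') ≥ 0 for all s,s' and ∑_{s'∈S} P_h(s,s') = 1 for all s; assume g is absorbing, i.e., P_h(g,g) = 1 for all h. Define the failure probabilities backward by ρ_H(s) = 1 if s ≠ g and ρ_H(g) = 0, and ρ_h(s) = ∑_{s'∈S} P_h(s,s')·ρ_{h+1}(s') for 1 ≤ h ≤ H−1. Fix m with 1 ≤ m ≤ H and define φ_m(s) = 1 if s ≠ g, φ_m(g) = 0, and φ_h(s) = ∑_{s'∈S} P_h(s,s')·φ_{h+1}(s') for 1 ≤ h ≤ m−1 (so φ_1(s) is the probability that s_m ≠ g started from s_1 = s). Then for every s ∈ S, ρ_1(s) ≤ φ_1(s) · max_{s'∈S} ρ_m(s'). -/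
/-!
Both `ρ` and `φ · M`, with `M = max ρ_m`, solve the same backward recursion `v_h = P_h v_{h+1}`
on the steps `1 ≤ h < m`, and this recursion is monotone because the `P_h` are nonnegative. So it
suffices to compare them at step `m`: off `g` we have `ρ_m ≤ M = φ_m · M`, and at `g` both vanish
since a stochastic row with `P_h(g, g) = 1` puts no mass elsewhere, so `ρ_h(g)` stays equal to
`ρ_H(g) = 0`.
-/

open Finset

section

variable {S : Type*} [Fintype S]

theorem sum_mul_eq_of_apply_eq_one [DecidableEq S] {p : S → ℝ} (hp : ∀ s, 0 ≤ p s)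
    (hsum : ∑ s, p s = 1) {g : S} (hg : p g = 1) (f : S → ℝ) : ∑ s, p s * f s = f g := by
  have hrest : ∑ s ∈ univ.erase g, p s = 0 := by
    rw [← add_sum_erase _ _ (mem_univ g), hg] at hsum
    linarith
  rw [sum_eq_single g (fun s _ hs => ?_) (fun h => absurd (mem_univ g) h), hg, one_mul]
  rw [(sum_eq_zero_iff_of_nonneg fun t _ => hp t).mp hrest s (mem_erase.mpr ⟨hs, mem_univ s⟩),
    zero_mul]

def IsSpaceTimeHarmonic (P : ℕ → S → S → ℝ) (a b : ℕ) (v : ℕ → S → ℝ) : Prop :=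
  ∀ h, a ≤ h → h < b → ∀ s, v h s = ∑ s', P h s s' * v (h + 1) s'

namespace IsSpaceTimeHarmonic

variable {P : ℕ → S → S → ℝ} {a b : ℕ} {u v : ℕ → S → ℝ}

theorem mono {a' b' : ℕ} (hv : IsSpaceTimeHarmonic P a b v) (ha : a ≤ a') (hb : b' ≤ b) :
    IsSpaceTimeHarmonic P a' b' v :=
  fun h hah hhb => hv h (ha.trans hah) (hhb.trans_le hb)

theorem mul_const (hv : IsSpaceTimeHarmonic P a b v) (c : ℝ) :
    IsSpaceTimeHarmonic P a b fun h s => v h s * c := by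
  intro h hah hhb s
  simp_rw [hv h hah hhb s, sum_mul, mul_assoc]

theorem le_of_le (hP : ∀ h, a ≤ h → h < b → ∀ s s', 0 ≤ P h s s')
    (hu : IsSpaceTimeHarmonic P a b u) (hv : IsSpaceTimeHarmonic P a b v)
    (hb : ∀ s, u b s ≤ v b s) {h : ℕ} (hah : a ≤ h) (hhb : h ≤ b) (s : S) : u h s ≤ v h s := by
  revert s
  refine Nat.decreasingInduction' (fun k hkb hhk ih s => ?_) hhb hb
  have hak : a ≤ k := hah.trans hhk
  rw [hu k hak hkb, hv k hak hkb]
  exact sum_le_sum fun s' _ => mul_le_mul_of_nonneg_left (ih s') (hP k hak hkb s s')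

theorem apply_absorbing_eq [DecidableEq S] {g : S} (hv : IsSpaceTimeHarmonic P a b v)
    (hP : ∀ h, a ≤ h → h < b → ∀ s s', 0 ≤ P h s s')
    (hrow : ∀ h, a ≤ h → h < b → ∀ s, ∑ s', P h s s' = 1)
    (habs : ∀ h, a ≤ h → h < b → P h g g = 1) {h : ℕ} (hah : a ≤ h) (hhb : h ≤ b) :
    v h g = v b g := by
  refine Nat.decreasingInduction' (fun k hkb hhk ih => ?_) hhb rfl
  have hak : a ≤ k := hah.trans hhk
  rw [hv k hak hkb, sum_mul_eq_of_apply_eq_one (hP k hak hkb g) (hrow k hak hkb g)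
    (habs k hak hkb), ih]

end IsSpaceTimeHarmonic

end

theorem failure_prob_block_decomposition_general
    {S : Type*} [Fintype S] [DecidableEq S] [Nonempty S]
    (H : ℕ) (g : S) (P : ℕ → S → S → ℝ)
    (hPnn : ∀ h, 1 ≤ h → h < H → ∀ s s' : S, 0 ≤ P h s s')
    (hProw : ∀ h, 1 ≤ h → h < H → ∀ s : S, ∑ s' : S, P h s s' = 1)
    (habs : ∀ h, 1 ≤ h → h < H → P h g g = 1)
    (ρ : ℕ → S → ℝ)
    (hρH : ∀ s : S, ρ H s = if s = g then 0 else 1)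
    (hρ : ∀ h, 1 ≤ h → h < H → ∀ s : S, ρ h s = ∑ s' : S, P h s s' * ρ (h + 1) s')
    (m : ℕ) (hm1 : 1 ≤ m) (hmH : m ≤ H)
    (φ : ℕ → S → ℝ)
    (hφm : ∀ s : S, φ m s = if s = g then 0 else 1)
    (hφ : ∀ h, 1 ≤ h → h < m → ∀ s : S, φ h s = ∑ s' : S, P h s s' * φ (h + 1) s') :
    ∀ s : S, ρ 1 s ≤ φ 1 s * (Finset.univ.sup' Finset.univ_nonempty fun s' : S => ρ m s') := by
  set M := Finset.univ.sup' Finset.univ_nonempty fun s' : S => ρ m s'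
  have hρ' : IsSpaceTimeHarmonic P 1 H ρ := hρ
  have hρg : ρ m g = 0 := by
    rw [hρ'.apply_absorbing_eq hPnn hProw habs hm1 hmH, hρH, if_pos rfl]
  have hbase : ∀ s, ρ m s ≤ φ m s * M := by
    intro s
    rw [hφm]
    split_ifs with hs
    · rw [hs, hρg, zero_mul]
    · rw [one_mul]
      exact Finset.le_sup' (fun s' => ρ m s') (Finset.mem_univ s)
  exact fun s => (hρ'.mono le_rfl hmH).le_of_le (fun h h1 hhm => hPnn h h1 (hhm.trans_le hmH))
    ((show IsSpaceTimeHarmonic P 1 m φ from hφ).mul_const M) hbase le_rfl hm1 s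

/-- Block-decomposition step of Lemma 9: the probability `ρ 1 s` of failing to
reach the absorbing goal `g` by step `H` factorizes through the probability
`φ 1 s` of failing to reach `g` by an intermediate step `m`, times the worst-case
failure probability from step `m` onwards. -/
theorem failure_prob_block_decomposition
    {S : Type*} [Fintype S] [DecidableEq S] [Nonempty S]
    (H : ℕ) (hH : 1 ≤ H) (g : S) (P : ℕ → S → S → ℝ)
    (hPnn : ∀ h, 1 ≤ h → h < H → ∀ s s' : S, 0 ≤ P h s s')
    (hProw : ∀ h, 1 ≤ h → h < H → ∀ s : S, ∑ s' : S, P h s s' = 1)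
    (habs : ∀ h, 1 ≤ h → h < H → P h g g = 1)
    (ρ : ℕ → S → ℝ)
    (hρH : ∀ s : S, ρ H s = if s = g then 0 else 1)
    (hρ : ∀ h, 1 ≤ h → h < H → ∀ s : S, ρ h s = ∑ s' : S, P h s s' * ρ (h + 1) s')
    (m : ℕ) (hm1 : 1 ≤ m) (hmH : m ≤ H)
    (φ : ℕ → S → ℝ)
    (hφm : ∀ s : S, φ m s = if s = g then 0 else 1)
    (hφ : ∀ h, 1 ≤ h → h < m → ∀ s : S, φ h s = ∑ s' : S, P h s s' * φ (h + 1) s') :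
    ∀ s : S, ρ 1 s ≤ φ 1 s * (Finset.univ.sup' Finset.univ_nonempty fun s' : S => ρ m s') :=
  failure_prob_block_decomposition_general H g P hPnn hProw habs ρ hρH hρ m hm1 hmH φ hφm hφ
end

section
/- Let S be a finite nonempty set, D ≥ 1 an integer, H an integer with H ≥ 2D, g ∈ S, and for each h ∈ {1,...,H−1} let P_h : S × S → ℝ be a transition matrix, i.e., P_h(s,s') ≥ 0 for all s,s' and ∑_{s'∈S} P_h(s,s') = 1 for all s; assume g is absorbing, i.e., P_h(g,g) = 1 for all h. Define the failure probabilities backward by ρ_H(s) = 1 if s ≠ g and ρ_H(g) = 0, and ρ_h(s) = ∑_{s'∈S} P_h(s,s')·ρ_{h+1}(s') for 1 ≤ h ≤ H−1, and define the values backward by V_H(s) = 1 if s ≠ g, V_H(g) = 0, and V_h(s) = 1[s ≠ g] + ∑_{s'∈S} P_h(s,s')·V_{h+1}(s') for 1 ≤ h ≤ H−1. Assume that V_h(s) ≤ D for every h ∈ {1,...,H} and s ∈ S. Then for every s ∈ S, ρ_1(s) ≤ 2^{−⌊H/(2D)⌋} ≤ exp( −log(2)·H/(4D) ). -/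
/-!
Let `c` be the indicator of `s ≠ g`. Since `g` is absorbing, `c` is excessive (`P_h c ≤ c`), so
the probability `q_h^k(s)` of being off `g` at time `h + k` is nonincreasing in `k`. As `V_h(s)` is
at least the sum of these probabilities for `k = 0, …, 2D - 1`, we get `2D · q_h^{2D-1} ≤ V_h ≤ D`,
i.e. every block of `2D - 1` steps fails with probability at most `1/2`. The horizon contains
`⌊H/(2D)⌋` disjoint such blocks after time `1`, and the Markov property multiplies the failure
probabilities.
-/

open Finset

section ExpectAfter

variable {S : Type*} [Fintype S] (P : ℕ → S → S → ℝ)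

/-- `expectAfter P h k f s = E[f(s_{h+k}) | s_h = s]`, i.e. `(P_h P_{h+1} ⋯ P_{h+k-1} f)(s)`. -/
def expectAfter : ℕ → ℕ → (S → ℝ) → S → ℝ
  | _, 0, f => f
  | h, k + 1, f => fun s => ∑ s', P h s s' * expectAfter (h + 1) k f s'

@[simp]
lemma expectAfter_zero (h : ℕ) (f : S → ℝ) : expectAfter P h 0 f = f := rfl

lemma expectAfter_succ (h k : ℕ) (f : S → ℝ) (s : S) :
    expectAfter P h (k + 1) f s = ∑ s', P h s s' * expectAfter P (h + 1) k f s' := rfl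

lemma expectAfter_smul (a : ℝ) (f : S → ℝ) :
    ∀ k h, expectAfter P h k (a • f) = a • expectAfter P h k f
  | 0, _ => rfl
  | k + 1, h => by
      funext s
      simp only [expectAfter_succ, expectAfter_smul a f k, Pi.smul_apply, smul_eq_mul, mul_sum]
      exact sum_congr rfl fun _ _ => mul_left_comm ..

variable {P}

lemma eq_expectAfter_of_recursion {a b : ℕ} {ρ : ℕ → S → ℝ}
    (hρ : ∀ h, a ≤ h → h < b → ∀ s, ρ h s = ∑ s', P h s s' * ρ (h + 1) s') :
    ∀ k h, a ≤ h → h + k ≤ b → ρ h = expectAfter P h k (ρ (h + k))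
  | 0, _, _, _ => rfl
  | k + 1, h, ha, hb => funext fun s => by
      rw [hρ h ha (by omega) s, expectAfter_succ, show h + (k + 1) = h + 1 + k by omega]
      exact sum_congr rfl fun s' _ => by
        rw [← eq_expectAfter_of_recursion hρ k (h + 1) (by omega) (by omega)]

variable {a b : ℕ} (hP : ∀ h, a ≤ h → h < b → ∀ s s', 0 ≤ P h s s')
include hP

lemma expectAfter_mono {f f' : S → ℝ} (hf : f ≤ f') :
    ∀ k h, a ≤ h → h + k ≤ b → expectAfter P h k f ≤ expectAfter P h k f'
  | 0, _, _, _ => hf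
  | k + 1, h, ha, hb => fun s =>
      sum_le_sum fun s' _ => mul_le_mul_of_nonneg_left
        (expectAfter_mono hf k (h + 1) (by omega) (by omega) s') (hP h ha (by omega) s s')

lemma expectAfter_le_of_excessive {c : S → ℝ}
    (hc : ∀ h, a ≤ h → h < b → ∀ s, ∑ s', P h s s' * c s' ≤ c s) :
    ∀ k h, a ≤ h → h + k ≤ b → expectAfter P h k c ≤ c
  | 0, _, _, _ => le_rfl
  | k + 1, h, ha, hb => fun s =>
      calc expectAfter P h (k + 1) c s
          ≤ ∑ s', P h s s' * c s' := sum_le_sum fun s' _ => mul_le_mul_of_nonneg_left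
            (expectAfter_le_of_excessive hc k (h + 1) (by omega) (by omega) s')
            (hP h ha (by omega) s s')
        _ ≤ c s := hc h ha (by omega) s

lemma le_of_supersolution {c : S → ℝ} {V : ℕ → S → ℝ} (hc : 0 ≤ c)
    (hV : ∀ h, a ≤ h → h < b → ∀ s, c s + ∑ s', P h s s' * V (h + 1) s' ≤ V h s)
    (hVb : c ≤ V b) {h : ℕ} (ha : a ≤ h) (hb : h ≤ b) : c ≤ V h := by
  induction hb using Nat.decreasingInduction with
  | self => exact hVb
  | of_succ h hlt hnext =>
    intro s
    have hsum : 0 ≤ ∑ s', P h s s' * V (h + 1) s' := sum_nonneg fun s' _ =>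
      mul_nonneg (hP h ha hlt s s') ((hc s').trans (hnext (by omega) s'))
    linarith [hV h ha hlt s]

lemma le_of_excessive {ρ : ℕ → S → ℝ} {c : S → ℝ}
    (hc : ∀ h, a ≤ h → h < b → ∀ s, ∑ s', P h s s' * c s' ≤ c s)
    (hρ : ∀ h, a ≤ h → h < b → ∀ s, ρ h s = ∑ s', P h s s' * ρ (h + 1) s')
    (hρb : ρ b = c) {h : ℕ} (ha : a ≤ h) (hb : h ≤ b) : ρ h ≤ c := by
  rw [eq_expectAfter_of_recursion hρ (b - h) h ha (by omega), Nat.add_sub_cancel' hb, hρb]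
  exact expectAfter_le_of_excessive hP hc (b - h) h ha (by omega)

/-- `V_h` dominates `∑_{i ≤ k} expectAfter P h i c`, and each term is at least the last one since
`c` is excessive. -/
lemma succ_smul_expectAfter_le {c : S → ℝ} {V : ℕ → S → ℝ}
    (hc : ∀ h, a ≤ h → h < b → ∀ s, ∑ s', P h s s' * c s' ≤ c s)
    (hV : ∀ h, a ≤ h → h < b → ∀ s, c s + ∑ s', P h s s' * V (h + 1) s' ≤ V h s)
    (hcV : ∀ h, a ≤ h → h ≤ b → c ≤ V h) :
    ∀ k h, a ≤ h → h + k ≤ b → ((k : ℝ) + 1) • expectAfter P h k c ≤ V h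
  | 0, h, ha, hb => by simpa using hcV h ha (by omega)
  | k + 1, h, ha, hb => fun s => by
      have hlast := expectAfter_le_of_excessive hP hc (k + 1) h ha hb s
      have hcount :
          ((k : ℝ) + 1) * expectAfter P h (k + 1) c s ≤ ∑ s', P h s s' * V (h + 1) s' := by
        rw [expectAfter_succ, mul_sum]
        refine sum_le_sum fun s' _ => ?_
        rw [mul_left_comm]
        exact mul_le_mul_of_nonneg_left
          (succ_smul_expectAfter_le hc hV hcV k (h + 1) (by omega) (by omega) s')
          (hP h ha (by omega) s s')
      simp only [Pi.smul_apply, smul_eq_mul, Nat.cast_succ]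
      linarith [hV h ha (by omega) s]

lemma expectAfter_le_smul_of_le_mul {c : S → ℝ} {V : ℕ → S → ℝ} {r : ℝ} {k : ℕ}
    (hc01 : ∀ s, c s = 0 ∨ c s = 1)
    (hc : ∀ h, a ≤ h → h < b → ∀ s, ∑ s', P h s s' * c s' ≤ c s)
    (hV : ∀ h, a ≤ h → h < b → ∀ s, c s + ∑ s', P h s s' * V (h + 1) s' ≤ V h s)
    (hcV : ∀ h, a ≤ h → h ≤ b → c ≤ V h)
    (hVr : ∀ h, a ≤ h → h ≤ b → ∀ s, V h s ≤ (k + 1) * r)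
    {h : ℕ} (ha : a ≤ h) (hb : h + k ≤ b) : expectAfter P h k c ≤ r • c := fun s => by
  have hcount := succ_smul_expectAfter_le hP hc hV hcV k h ha hb s
  have hexc := expectAfter_le_of_excessive hP hc k h ha hb s
  have hVs := hVr h ha (by omega) s
  simp only [Pi.smul_apply, smul_eq_mul] at hcount ⊢
  rcases hc01 s with hs | hs <;> rw [hs] at hexc ⊢
  · simpa using hexc
  · nlinarith

lemma le_pow_smul_of_expectAfter_le {ρ : ℕ → S → ℝ} {c : S → ℝ} {r : ℝ} {k : ℕ} (hr : 0 ≤ r)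
    (hρ : ∀ h, a ≤ h → h < b → ∀ s, ρ h s = ∑ s', P h s s' * ρ (h + 1) s')
    (hρc : ∀ h, a ≤ h → h ≤ b → ρ h ≤ c)
    (hblock : ∀ h, a ≤ h → h + k ≤ b → expectAfter P h k c ≤ r • c) :
    ∀ j h, a ≤ h → h + k * j ≤ b → ρ h ≤ r ^ j • c
  | 0, h, ha, hb => by simpa using hρc h ha (by omega)
  | j + 1, h, ha, hb => by
      have hb' : h + k + k * j ≤ b := by rw [mul_add_one] at hb; omega
      have htail := le_pow_smul_of_expectAfter_le hr hρ hρc hblock j (h + k) (by omega) hb'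
      calc ρ h = expectAfter P h k (ρ (h + k)) := eq_expectAfter_of_recursion hρ k h ha (by omega)
        _ ≤ expectAfter P h k (r ^ j • c) := expectAfter_mono hP htail k h ha (by omega)
        _ = r ^ j • expectAfter P h k c := expectAfter_smul P _ c k h
        _ ≤ r ^ j • r • c :=
            smul_le_smul_of_nonneg_left (hblock h ha (by omega)) (pow_nonneg hr j)
        _ = r ^ (j + 1) • c := by rw [smul_smul, pow_succ]

end ExpectAfter

lemma sum_mul_ite_le {S : Type*} [Fintype S] [DecidableEq S] {p : S → S → ℝ} {g : S}
    (hp : ∀ s s', 0 ≤ p s s') (hrow : ∀ s, ∑ s', p s s' = 1) (hg : p g g = 1) (s : S) :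
    ∑ s', p s s' * (if s' = g then 0 else 1) ≤ if s = g then 0 else 1 := by
  have hsum : ∑ s', p s s' * (if s' = g then 0 else 1) = 1 - p s g := by
    simp [mul_ite, sum_ite, filter_ne', hrow]
  rw [hsum]
  by_cases hs : s = g
  · simp [hs, hg]
  · simpa [hs] using hp s g

lemma half_pow_div_le_exp (n m : ℕ) (hm : 0 < m) (hmn : m ≤ n) :
    (1 / 2 : ℝ) ^ (n / m) ≤ Real.exp (-(Real.log 2 * n / (2 * m))) := by
  have hn : n ≤ 2 * m * (n / m) := by
    have := Nat.lt_mul_div_succ n hm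
    have := (Nat.one_le_div_iff hm).mpr hmn
    nlinarith
  have hhalf : (1 / 2 : ℝ) ^ (n / m) = Real.exp (-(n / m : ℕ) * Real.log 2) := by
    rw [neg_mul, ← mul_neg, Real.exp_nat_mul, Real.exp_neg, Real.exp_log two_pos, one_div]
  rw [hhalf, Real.exp_le_exp, neg_mul, neg_le_neg_iff,
    div_le_iff₀ (by positivity), mul_comm _ (Real.log 2), mul_assoc]
  gcongr
  exact_mod_cast (by linarith [hn] : n ≤ (n / m) * (2 * m))

theorem failure_prob_exponential_decay_general
    {S : Type*} [Fintype S] [DecidableEq S]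
    (D : ℕ) (hD : 1 ≤ D) (H : ℕ) (hH : 2 * D ≤ H) (g : S) (P : ℕ → S → S → ℝ)
    (hPnn : ∀ h, 1 ≤ h → h < H → ∀ s s' : S, 0 ≤ P h s s')
    (hProw : ∀ h, 1 ≤ h → h < H → ∀ s : S, ∑ s' : S, P h s s' = 1)
    (habs : ∀ h, 1 ≤ h → h < H → P h g g = 1)
    (ρ V : ℕ → S → ℝ)
    (hρH : ∀ s : S, ρ H s = if s = g then 0 else 1)
    (hρ : ∀ h, 1 ≤ h → h < H → ∀ s : S, ρ h s = ∑ s' : S, P h s s' * ρ (h + 1) s')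
    (hVH : ∀ s : S, V H s = if s = g then 0 else 1)
    (hV : ∀ h, 1 ≤ h → h < H → ∀ s : S,
      V h s = (if s = g then 0 else 1) + ∑ s' : S, P h s s' * V (h + 1) s')
    (hVbound : ∀ h, 1 ≤ h → h ≤ H → ∀ s : S, V h s ≤ (D : ℝ)) :
    ∀ s : S,
      ρ 1 s ≤ ((1 : ℝ) / 2) ^ (H / (2 * D)) ∧
      ((1 : ℝ) / 2) ^ (H / (2 * D))
        ≤ Real.exp (-(Real.log 2 * (H : ℝ) / (4 * (D : ℝ)))) := by
  intro s
  set c : S → ℝ := fun s => if s = g then 0 else 1 with hc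
  have hc01 : ∀ s, c s = 0 ∨ c s = 1 := fun s => by by_cases hs : s = g <;> simp [hc, hs]
  have hc_exc : ∀ h, 1 ≤ h → h < H → ∀ s, ∑ s', P h s s' * c s' ≤ c s := fun h h1 h2 =>
    sum_mul_ite_le (hPnn h h1 h2) (hProw h h1 h2) (habs h h1 h2)
  have hV_sup : ∀ h, 1 ≤ h → h < H → ∀ s, c s + ∑ s', P h s s' * V (h + 1) s' ≤ V h s :=
    fun h h1 h2 s => (hV h h1 h2 s).ge
  have hcV : ∀ h, 1 ≤ h → h ≤ H → c ≤ V h := fun h h1 h2 =>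
    le_of_supersolution hPnn (fun s => by rcases hc01 s with hs | hs <;> simp [hs]) hV_sup
      (fun s => (hVH s).ge) h1 h2
  have hblock : ∀ h, 1 ≤ h → h + (2 * D - 1) ≤ H →
      expectAfter P h (2 * D - 1) c ≤ (1 / 2 : ℝ) • c := fun h h1 h2 =>
    expectAfter_le_smul_of_le_mul hPnn hc01 hc_exc hV_sup hcV
      (fun h' h1' h2' s => by
        rw [Nat.cast_sub (by omega)]; push_cast; linarith [hVbound h' h1' h2' s])
      h1 h2
  have hK : 1 + (2 * D - 1) * (H / (2 * D)) ≤ H := by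
    have hK1 := (Nat.one_le_div_iff (by omega : 0 < 2 * D)).mpr hH
    have := Nat.div_mul_le_self H (2 * D)
    rw [Nat.sub_one_mul, mul_comm]
    omega
  refine ⟨?_, ?_⟩
  · calc ρ 1 s ≤ ((1 / 2 : ℝ) ^ (H / (2 * D)) • c) s :=
          le_pow_smul_of_expectAfter_le hPnn (by norm_num) hρ
            (fun _ h1 h2 => le_of_excessive hPnn hc_exc hρ (funext hρH) h1 h2) hblock
            _ 1 le_rfl hK s
      _ ≤ (1 / 2 : ℝ) ^ (H / (2 * D)) :=
          mul_le_of_le_one_right (by positivity) (by rcases hc01 s with hs | hs <;> simp [hs])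
  · convert half_pow_div_le_exp H (2 * D) (by omega) hH using 3
    push_cast
    ring

/-- Finite-horizon formulation of Lemma 9 (`lem:control_terminal_prob`): if the
expected cumulative unit cost `V h s` is uniformly bounded by `D` and the horizon
satisfies `H ≥ 2D`, then the probability `ρ 1 s` of not reaching the absorbing
goal `g` by step `H` satisfies `ρ 1 s ≤ 2^{-⌊H/(2D)⌋} ≤ exp(-log 2 · H/(4D))`. -/
theorem failure_prob_exponential_decay
    {S : Type*} [Fintype S] [DecidableEq S] [Nonempty S]
    (D : ℕ) (hD : 1 ≤ D) (H : ℕ) (hH : 2 * D ≤ H) (g : S) (P : ℕ → S → S → ℝ)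
    (hPnn : ∀ h, 1 ≤ h → h < H → ∀ s s' : S, 0 ≤ P h s s')
    (hProw : ∀ h, 1 ≤ h → h < H → ∀ s : S, ∑ s' : S, P h s s' = 1)
    (habs : ∀ h, 1 ≤ h → h < H → P h g g = 1)
    (ρ V : ℕ → S → ℝ)
    (hρH : ∀ s : S, ρ H s = if s = g then 0 else 1)
    (hρ : ∀ h, 1 ≤ h → h < H → ∀ s : S, ρ h s = ∑ s' : S, P h s s' * ρ (h + 1) s')
    (hVH : ∀ s : S, V H s = if s = g then 0 else 1)
    (hV : ∀ h, 1 ≤ h → h < H → ∀ s : S,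
      V h s = (if s = g then 0 else 1) + ∑ s' : S, P h s s' * V (h + 1) s')
    (hVbound : ∀ h, 1 ≤ h → h ≤ H → ∀ s : S, V h s ≤ (D : ℝ)) :
    ∀ s : S,
      ρ 1 s ≤ ((1 : ℝ) / 2) ^ (H / (2 * D)) ∧
      ((1 : ℝ) / 2) ^ (H / (2 * D))
        ≤ Real.exp (-(Real.log 2 * (H : ℝ) / (4 * (D : ℝ)))) :=
  failure_prob_exponential_decay_general D hD H hH g P hPnn hProw habs ρ V hρH hρ hVH hV hVbound
end
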